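/- Let (X,d) be a proper geodesic δ-hyperbolic metric space, f : X → X a non-expanding map, η ∈ ∂_G X a boundary regular fixed point of f, and γ : [0,+∞) → X a geodesic ray with endpoint η. Then the limit lim_{t→+∞} (d(γ(t),γ(0)) − d(f(γ(t)),γ(0))) exists and is at most log λ_{η,γ(0)}(f) + 4δ; moreover for every p ∈ X, limsup_{t→+∞} (d(γ(t),p) − d(f(γ(t)),p)) ≤ log λ_{η,p}(f) + 8δ. -/
import Mathlib


/- Preliminary definitions: Gromov hyperbolicity, Gromov boundary (via geodesic rays),
   dilations, boundary regular fixed points, horofunctions, backward orbits. -/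

noncomputable section

open Filter Topology Metric Set

/-- The Gromov product of `x` and `y` with respect to the base point `p`. -/
def gromovProd {X : Type*} [MetricSpace X] (p x y : X) : ℝ :=
  (dist p x + dist p y - dist x y) / 2

/-- A (unit speed) geodesic ray, parametrized by `t ≥ 0`. -/
def IsGeodesicRay {X : Type*} [MetricSpace X] (γ : ℝ → X) : Prop :=
  ∀ s t : ℝ, 0 ≤ s → 0 ≤ t → dist (γ s) (γ t) = |s - t|

/-- A (unit speed) geodesic segment from `x` to `y`, parametrized on `[0, dist x y]`. -/
def IsGeodesicFromTo {X : Type*} [MetricSpace X] (γ : ℝ → X) (x y : X) : Prop :=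
  γ 0 = x ∧ γ (dist x y) = y ∧
    ∀ s t : ℝ, s ∈ Set.Icc 0 (dist x y) → t ∈ Set.Icc 0 (dist x y) →
      dist (γ s) (γ t) = |s - t|

/-- A geodesic metric space: any two points are joined by a geodesic. -/
def IsGeodesicSpace (X : Type*) [MetricSpace X] : Prop :=
  ∀ x y : X, ∃ γ : ℝ → X, IsGeodesicFromTo γ x y

/-- `δ`-hyperbolicity via slim triangles: every side of every geodesic triangle is contained
in the `δ`-neighborhood of the union of the other two sides. -/
def IsDeltaHyperbolic (X : Type*) [MetricSpace X] (δ : ℝ) : Prop :=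
  ∀ x y z : X, ∀ α β γ : ℝ → X,
    IsGeodesicFromTo α x y → IsGeodesicFromTo β y z → IsGeodesicFromTo γ x z →
    ∀ t ∈ Set.Icc (0 : ℝ) (dist x z),
      ∃ u ∈ α '' Set.Icc 0 (dist x y) ∪ β '' Set.Icc 0 (dist y z), dist (γ t) u ≤ δ

/-- A Gromov hyperbolic space: `δ`-hyperbolic for some `δ ≥ 0`. -/
def GromovHyperbolic (X : Type*) [MetricSpace X] : Prop :=
  ∃ δ : ℝ, 0 ≤ δ ∧ IsDeltaHyperbolic X δ

/-- The trace on `X` of the filter of neighborhoods, in the Gromov compactification, of the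
boundary point determined by the geodesic ray `γ`: a sequence (or a function) converges to
the boundary point `[γ]` iff its Gromov products with points far along `γ` tend to `+∞`. -/
def gromovFilter {X : Type*} [MetricSpace X] (γ : ℝ → X) : Filter X :=
  ⨅ M : ℝ, Filter.principal
    {x | M ≤ Filter.liminf (fun t : ℝ => gromovProd (γ 0) x (γ t)) Filter.atTop}

/-- Two geodesic rays are asymptotic, i.e. they determine the same point of the
Gromov boundary. -/
def AsympRays {X : Type*} [MetricSpace X] (γ σ : ℝ → X) : Prop :=
  ∃ C : ℝ, ∀ t : ℝ, 0 ≤ t → dist (γ t) (σ t) ≤ C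

/-- A non-expanding (1-Lipschitz) map. -/
def Nonexpanding {X : Type*} [MetricSpace X] (f : X → X) : Prop :=
  ∀ x y : X, dist (f x) (f y) ≤ dist x y

/-- Membership in the geodesic region `A(σ, R)` with vertex `[σ]`. -/
def InGeodesicRegion {X : Type*} [MetricSpace X] (σ : ℝ → X) (R : ℝ) (x : X) : Prop :=
  ∃ t : ℝ, 0 ≤ t ∧ dist x (σ t) < R

/-- `f` has geodesic limit `[ξ]` at the boundary point `[γ]`: for every sequence converging
to `[γ]` inside a geodesic region with vertex `[γ]`, the image sequence converges to `[ξ]`. -/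
def HasGeodesicLimitAt {X : Type*} [MetricSpace X] (f : X → X) (γ ξ : ℝ → X) : Prop :=
  ∀ σ : ℝ → X, IsGeodesicRay σ → AsympRays γ σ → ∀ R : ℝ, 0 < R →
    ∀ x : ℕ → X, (∀ n, InGeodesicRegion σ R (x n)) →
      Filter.Tendsto x Filter.atTop (gromovFilter γ) →
      Filter.Tendsto (fun n => f (x n)) Filter.atTop (gromovFilter ξ)

/-- `log λ_{η,p}(f)`, the logarithm of the dilation of `f` at the boundary point `η = [γ]`
with respect to the base point `p`, as an extended real number:
`log λ_{η,p}(f) = liminf_{x → η} (d(x,p) - d(f(x),p))`. -/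
def logDilation {X : Type*} [MetricSpace X] (p : X) (γ : ℝ → X) (f : X → X) : EReal :=
  Filter.liminf (fun x => ((dist x p - dist (f x) p : ℝ) : EReal)) (gromovFilter γ)

/-- The dilation of `f` at `[γ]` w.r.t. `p` is finite with logarithm the real number `L`. -/
def HasLogDilation {X : Type*} [MetricSpace X] (p : X) (γ : ℝ → X) (f : X → X) (L : ℝ) : Prop :=
  logDilation p γ f = (L : EReal)

/-- The point `[γ]` of the Gromov boundary is a boundary regular fixed point (BRFP) of `f`:
the dilation at `[γ]` is finite and `f` has geodesic limit `[γ]` at `[γ]`. -/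
def IsBRFP {X : Type*} [MetricSpace X] (f : X → X) (γ : ℝ → X) : Prop :=
  IsGeodesicRay γ ∧ logDilation (γ 0) γ f ≠ ⊤ ∧ HasGeodesicLimitAt f γ γ

/-- The stable dilation of `f` at the BRFP `[γ]` has logarithm `L`:
`log Λ_η = lim_n (1/n) log λ_{η,p}(f^n)`. -/
def HasStableLogDilation {X : Type*} [MetricSpace X] (p : X) (γ : ℝ → X) (f : X → X)
    (L : ℝ) : Prop :=
  ∃ l : ℕ → ℝ, (∀ n : ℕ, 1 ≤ n → HasLogDilation p γ (f^[n]) (l n)) ∧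
    Filter.Tendsto (fun n : ℕ => l n / n) Filter.atTop (nhds L)

/-- A backward orbit of `f`. -/
def IsBackwardOrbit {X : Type*} (f : X → X) (x : ℕ → X) : Prop :=
  ∀ n : ℕ, f (x (n + 1)) = x n

/-- A sequence has bounded step. -/
def BoundedStep {X : Type*} [MetricSpace X] (x : ℕ → X) : Prop :=
  ∃ S : ℝ, ∀ n : ℕ, dist (x n) (x (n + 1)) ≤ S

/-- The backward step rate of a backward orbit with bounded step equals `b`:
`σ_m = lim_n d(x_{n+m}, x_n)` exists for each `m`, and `b = lim_m σ_m / m`. -/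
def HasBackwardStepRate {X : Type*} [MetricSpace X] (x : ℕ → X) (b : ℝ) : Prop :=
  ∃ σ : ℕ → ℝ,
    (∀ m : ℕ, Filter.Tendsto (fun n : ℕ => dist (x (n + m)) (x n)) Filter.atTop (nhds (σ m))) ∧
    Filter.Tendsto (fun m : ℕ => σ m / m) Filter.atTop (nhds b)

/-- `f` is elliptic: some (equivalently, every) forward orbit is bounded. -/
def IsElliptic {X : Type*} [MetricSpace X] (f : X → X) : Prop :=
  ∃ x : X, Bornology.IsBounded (Set.range fun n : ℕ => f^[n] x)

/-- The limit retract `ω_f`: the union of all ω-limit sets of forward orbits of `f`. -/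
def limitRetract {X : Type*} [MetricSpace X] (f : X → X) : Set X :=
  ⋃ x : X,
    {y | ∃ φ : ℕ → ℕ, StrictMono φ ∧ Filter.Tendsto (fun k => f^[φ k] x) Filter.atTop (nhds y)}

/-- `f` is weakly elliptic: elliptic with non-compact limit retract. -/
def WeaklyElliptic {X : Type*} [MetricSpace X] (f : X → X) : Prop :=
  IsElliptic f ∧ ¬ IsCompact (limitRetract f)

/-- The divergence rate (translation length) of `f` equals `c`:
`c(f) = lim_n d(x, f^n(x))/n` for every `x`. -/
def HasDivergenceRate {X : Type*} [MetricSpace X] (f : X → X) (c : ℝ) : Prop :=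
  ∀ x : X, Filter.Tendsto (fun n : ℕ => dist x (f^[n] x) / n) Filter.atTop (nhds c)

/-- `[γ]` is the Denjoy–Wolff point of `f`: every forward orbit converges to `[γ]`. -/
def IsDenjoyWolffPt {X : Type*} [MetricSpace X] (f : X → X) (γ : ℝ → X) : Prop :=
  IsGeodesicRay γ ∧
    ∀ x : X, Filter.Tendsto (fun n : ℕ => f^[n] x) Filter.atTop (gromovFilter γ)

/-- `h = h_{a,p}` is a horofunction normalized at `p` (`h(p) = 0`): a limit, along an escaping
sequence `w`, of the functions `y ↦ d(w_n, y) - d(w_n, p)`. -/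
def IsHorofunctionAt {X : Type*} [MetricSpace X] (p : X) (h : X → ℝ) : Prop :=
  h p = 0 ∧ ∃ w : ℕ → X, Filter.Tendsto (fun n => dist p (w n)) Filter.atTop Filter.atTop ∧
    ∀ y : X, Filter.Tendsto (fun n => dist (w n) y - dist (w n) p) Filter.atTop (nhds (h y))

/-- The horofunction class of `h` (a point `a ∈ ∂_H X`) projects under the canonical map
`Φ : X̄^H → X̄^G` to the Gromov boundary point `[γ]`, i.e. `a ∈ Φ⁻¹([γ])`. -/
def HoroProjectsTo {X : Type*} [MetricSpace X] (p : X) (h : X → ℝ) (γ : ℝ → X) : Prop :=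
  ∃ w : ℕ → X, Filter.Tendsto (fun n => dist p (w n)) Filter.atTop Filter.atTop ∧
    (∀ y : X, Filter.Tendsto (fun n => dist (w n) y - dist (w n) p) Filter.atTop (nhds (h y))) ∧
    Filter.Tendsto w Filter.atTop (gromovFilter γ)

/-- The horofunction compactification is equivalent to the Gromov compactification:
the canonical continuous map `Φ : X̄^H → X̄^G` is injective (hence a homeomorphism). -/
def CompactificationsEquivalent (X : Type*) [MetricSpace X] : Prop :=
  ∀ (p : X) (h₁ h₂ : X → ℝ), IsHorofunctionAt p h₁ → IsHorofunctionAt p h₂ →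
    (∃ γ : ℝ → X, IsGeodesicRay γ ∧ HoroProjectsTo p h₁ γ ∧ HoroProjectsTo p h₂ γ) → h₁ = h₂

/-- An escaping sequence: it eventually leaves every compact subset. -/
def Escaping {X : Type*} [TopologicalSpace X] (x : ℕ → X) : Prop :=
  ∀ K : Set X, IsCompact K → ∀ᶠ n in Filter.atTop, x n ∉ K

/-- A discrete quasi-geodesic. -/
def DiscreteQuasiGeodesic {X : Type*} [MetricSpace X] (x : ℕ → X) : Prop :=
  ∃ A B : ℝ, 1 ≤ A ∧ 0 ≤ B ∧ ∀ n m : ℕ,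
    A⁻¹ * |(n : ℝ) - (m : ℝ)| - B ≤ dist (x n) (x m) ∧
      dist (x n) (x m) ≤ A * |(n : ℝ) - (m : ℝ)| + B

/-- An almost geodesic curve. -/
def IsAlmostGeodesic {X : Type*} [MetricSpace X] (α : ℝ → X) : Prop :=
  ∀ ε : ℝ, 0 < ε → ∃ T : ℝ, 0 ≤ T ∧ ∀ t₁ t₂ : ℝ, T ≤ t₁ → T ≤ t₂ →
    |t₁ - t₂| - ε ≤ dist (α t₁) (α t₂) ∧ dist (α t₁) (α t₂) ≤ |t₁ - t₂|

end

section AuxProof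

open Filter Topology Metric Set

variable {X : Type*} [MetricSpace X]

lemma gromovProd_nonneg' (p x y : X) : 0 ≤ gromovProd p x y := by
  have h := dist_triangle x p y
  rw [dist_comm x p] at h
  unfold gromovProd
  linarith

lemma exists_deep (γ : ℝ → X) (f : X → X) (p : X) (L : ℝ)
    (hL : HasLogDilation p γ f L) {ε : ℝ} (hε : 0 < ε) (M : ℝ) :
    ∃ x : X, dist x p - dist (f x) p < L + ε ∧
      M ≤ Filter.liminf (fun s : ℝ => gromovProd (γ 0) x (γ s)) Filter.atTop := by
  have hS : {x : X | M ≤ Filter.liminf (fun s : ℝ => gromovProd (γ 0) x (γ s)) Filter.atTop}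
      ∈ gromovFilter γ := Filter.mem_iInf_of_mem M (Filter.mem_principal_self _)
  unfold HasLogDilation logDilation at hL
  have hlt : Filter.liminf (fun x : X => ((dist x p - dist (f x) p : ℝ) : EReal))
      (gromovFilter γ) < ((L + ε : ℝ) : EReal) := by
    rw [hL]
    exact_mod_cast lt_add_of_pos_right L hε
  have hfreq := Filter.frequently_lt_of_liminf_lt (h := hlt)
  have hSe : ∀ᶠ x in gromovFilter γ,
      M ≤ Filter.liminf (fun s : ℝ => gromovProd (γ 0) x (γ s)) Filter.atTop := hS
  obtain ⟨x, hx1, hx2⟩ := (hfreq.and_eventually hSe).exists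
  refine ⟨x, ?_, hx2⟩
  exact_mod_cast hx1

lemma dist_ray (γ : ℝ → X) (hray : IsGeodesicRay γ) {a b : ℝ} (ha : 0 ≤ a) (hb : a ≤ b) :
    dist (γ a) (γ b) = b - a := by
  rw [hray a b ha (ha.trans hb), abs_of_nonpos (by linarith)]
  ring

lemma near_ray (hgeo : IsGeodesicSpace X) {δ : ℝ} (hδ : 0 ≤ δ)
    (hhyp : IsDeltaHyperbolic X δ) {γ : ℝ → X} (hray : IsGeodesicRay γ)
    (x : X) {t s : ℝ} (ht : 0 ≤ t) (hts : t ≤ s)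
    (hprod : t + δ < gromovProd (γ 0) x (γ s)) :
    ∃ (α : ℝ → X) (r : ℝ), IsGeodesicFromTo α (γ 0) x ∧ r ∈ Set.Icc 0 (dist (γ 0) x) ∧
      t - δ ≤ r ∧ dist (γ t) (α r) ≤ δ := by
  obtain ⟨α, hα⟩ := hgeo (γ 0) x
  obtain ⟨β, hβ⟩ := hgeo x (γ s)
  have hs : 0 ≤ s := ht.trans hts
  have hd0s : dist (γ 0) (γ s) = s := by
    have := dist_ray γ hray le_rfl hs
    simpa using this
  have hdt : dist (γ 0) (γ t) = t := by
    have := dist_ray γ hray le_rfl ht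
    simpa using this
  have hγside : IsGeodesicFromTo γ (γ 0) (γ s) := by
    refine ⟨rfl, by rw [hd0s], fun a b ha hb => hray a b ha.1 hb.1⟩
  obtain ⟨u, hu, hdu⟩ :=
    hhyp (γ 0) x (γ s) α β γ hα hβ hγside t ⟨ht, by rw [hd0s]; exact hts⟩
  rcases hu with hu | hu
  · obtain ⟨r, hr, rfl⟩ := hu
    refine ⟨α, r, hα, hr, ?_, hdu⟩
    have h3 : dist (γ 0) (α r) = r := by
      conv_lhs => rw [← hα.1]
      rw [hα.2.2 0 r ⟨le_rfl, dist_nonneg⟩ hr, zero_sub, abs_neg, abs_of_nonneg hr.1]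
    have h2 := dist_triangle (γ 0) (α r) (γ t)
    have h4 : dist (α r) (γ t) = dist (γ t) (α r) := dist_comm _ _
    linarith [h2, h3, hdu, hdt.symm ▸ h2]
  · exfalso
    obtain ⟨r, hr, rfl⟩ := hu
    set D := dist (γ 0) x with hD
    set E := dist x (γ s) with hE
    have hβ0 : β 0 = x := hβ.1
    have hβE : β E = γ s := hβ.2.1
    have h1 : dist (β 0) (β r) = r := by
      rw [hβ.2.2 0 r ⟨le_rfl, dist_nonneg⟩ hr, zero_sub, abs_neg, abs_of_nonneg hr.1]
    have h2 : dist (β r) (β E) = E - r := by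
      rw [hβ.2.2 r E hr ⟨dist_nonneg, le_rfl⟩, abs_of_nonpos (by linarith [hr.2])]
      ring
    have hst : dist (γ t) (γ s) = s - t := dist_ray γ hray ht hts
    have c1 := dist_triangle (γ t) (β r) (γ s)
    have c1' : dist (β r) (γ s) = E - r := by rw [← hβE]; exact h2
    have c2 := dist_triangle (γ 0) (γ t) x
    have c3 := dist_triangle (γ t) (β r) x
    have c3' : dist (β r) x = r := by rw [dist_comm, ← hβ0]; exact h1
    have hprod' : 2 * (t + δ) < D + s - E := by
      unfold gromovProd at hprod
      rw [hd0s] at hprod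
      linarith
    linarith [c1, c1', c2, c3, c3', hst, hdt, hdu, hprod']

lemma pointwise_base (hgeo : IsGeodesicSpace X) {δ : ℝ} (hδ : 0 ≤ δ)
    (hhyp : IsDeltaHyperbolic X δ) {f : X → X} (hf : Nonexpanding f)
    {γ : ℝ → X} (hray : IsGeodesicRay γ) (L₀ : ℝ)
    (hL₀ : HasLogDilation (γ 0) γ f L₀) {t : ℝ} (ht : 0 ≤ t) :
    dist (γ t) (γ 0) - dist (f (γ t)) (γ 0) ≤ L₀ + 2 * δ := by
  refine le_of_forall_pos_le_add fun ε hε => ?_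
  obtain ⟨x, hux, hdeep⟩ := exists_deep γ f (γ 0) L₀ hL₀ hε (t + δ + 1)
  have hbdd : Filter.IsBoundedUnder (· ≥ ·) Filter.atTop
      (fun s : ℝ => gromovProd (γ 0) x (γ s)) :=
    Filter.isBoundedUnder_of ⟨0, fun s => gromovProd_nonneg' _ _ _⟩
  have hev : ∀ᶠ s : ℝ in Filter.atTop, t + δ < gromovProd (γ 0) x (γ s) :=
    Filter.eventually_lt_of_lt_liminf (lt_of_lt_of_le (by linarith) hdeep) hbdd
  obtain ⟨s, hs1, hs2⟩ := (hev.and (Filter.eventually_ge_atTop t)).exists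
  obtain ⟨α, r, hα, hr, hrt, hdu⟩ := near_ray hgeo hδ hhyp hray x ht hs2 hs1
  set D := dist (γ 0) x with hD
  have hDr : dist (α r) x = D - r := by
    conv_lhs => rw [← hα.2.1]
    rw [hα.2.2 r D hr ⟨dist_nonneg, le_rfl⟩, abs_of_nonpos (by linarith [hr.2])]
    ring
  have hxt : dist (γ t) x ≤ D - t + 2 * δ := by
    have := dist_triangle (γ t) (α r) x
    linarith
  have hdt : dist (γ t) (γ 0) = t := by
    rw [dist_comm]
    have := dist_ray γ hray le_rfl ht
    simpa using this
  have e1 : dist (f x) (f (γ t)) ≤ dist x (γ t) := hf x (γ t)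
  have e2 := dist_triangle (f x) (f (γ t)) (γ 0)
  have e3 : dist x (γ 0) = D := dist_comm x (γ 0) ▸ rfl
  have e4 : dist x (γ t) = dist (γ t) x := dist_comm _ _
  linarith [hux, e1, e2, hxt, hdt, e4, dist_comm x (γ 0)]

lemma pointwise_general (hgeo : IsGeodesicSpace X) {δ : ℝ} (hδ : 0 ≤ δ)
    (hhyp : IsDeltaHyperbolic X δ) {f : X → X} (hf : Nonexpanding f)
    {γ : ℝ → X} (hray : IsGeodesicRay γ) (p : X) (L : ℝ)
    (hL : HasLogDilation p γ f L) {t : ℝ} (ht : 0 ≤ t)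
    (htP : dist (γ 0) p + 2 * δ < t) :
    dist (γ t) p - dist (f (γ t)) p ≤ L + 4 * δ := by
  refine le_of_forall_pos_le_add fun ε hε => ?_
  obtain ⟨x, hux, hdeep⟩ := exists_deep γ f p L hL hε (t + δ + 1)
  have hbdd : Filter.IsBoundedUnder (· ≥ ·) Filter.atTop
      (fun s : ℝ => gromovProd (γ 0) x (γ s)) :=
    Filter.isBoundedUnder_of ⟨0, fun s => gromovProd_nonneg' _ _ _⟩
  have hev : ∀ᶠ s : ℝ in Filter.atTop, t + δ < gromovProd (γ 0) x (γ s) :=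
    Filter.eventually_lt_of_lt_liminf (lt_of_lt_of_le (by linarith) hdeep) hbdd
  obtain ⟨s, hs1, hs2⟩ := (hev.and (Filter.eventually_ge_atTop t)).exists
  obtain ⟨α, r, hα, hr, hrt, hdu⟩ := near_ray hgeo hδ hhyp hray x ht hs2 hs1
  obtain ⟨α₂, hα₂⟩ := hgeo (γ 0) p
  obtain ⟨β₂, hβ₂⟩ := hgeo p x
  obtain ⟨v, hv, hdv⟩ := hhyp (γ 0) p x α₂ β₂ α hα₂ hβ₂ hα r hr
  set P := dist (γ 0) p with hP
  have hr0 : dist (γ 0) (α r) = r := by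
    conv_lhs => rw [← hα.1]
    rw [hα.2.2 0 r ⟨le_rfl, dist_nonneg⟩ hr, zero_sub, abs_neg, abs_of_nonneg hr.1]
  rcases hv with hv | hv
  · exfalso
    obtain ⟨r₂, hr₂, rfl⟩ := hv
    have g1 : dist (γ 0) (α₂ r₂) = r₂ := by
      conv_lhs => rw [← hα₂.1]
      rw [hα₂.2.2 0 r₂ ⟨le_rfl, dist_nonneg⟩ hr₂, zero_sub, abs_neg, abs_of_nonneg hr₂.1]
    have g2 := dist_triangle (γ 0) (α₂ r₂) (α r)
    have g3 : dist (α₂ r₂) (α r) = dist (α r) (α₂ r₂) := dist_comm _ _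
    linarith [hr₂.2, hrt, g1, g2, g3, hdv]
  · obtain ⟨r₂, hr₂, rfl⟩ := hv
    set Q := dist p x with hQ
    have e1 : dist (β₂ 0) (β₂ r₂) = r₂ := by
      rw [hβ₂.2.2 0 r₂ ⟨le_rfl, dist_nonneg⟩ hr₂, zero_sub, abs_neg, abs_of_nonneg hr₂.1]
    have e2 : dist (β₂ r₂) (β₂ Q) = Q - r₂ := by
      rw [hβ₂.2.2 r₂ Q hr₂ ⟨dist_nonneg, le_rfl⟩, abs_of_nonpos (by linarith [hr₂.2])]
      ring
    have e3 : dist (γ t) (β₂ r₂) ≤ 2 * δ := by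
      have := dist_triangle (γ t) (α r) (β₂ r₂)
      linarith
    have f1 : dist (γ t) x ≤ dist (γ t) (β₂ r₂) + (Q - r₂) := by
      have := dist_triangle (γ t) (β₂ r₂) x
      have hx2 : dist (β₂ r₂) x = Q - r₂ := by rw [← hβ₂.2.1]; exact e2
      linarith
    have f2 : dist (γ t) p ≤ dist (γ t) (β₂ r₂) + r₂ := by
      have := dist_triangle (γ t) (β₂ r₂) p
      have hp2 : dist (β₂ r₂) p = r₂ := by rw [dist_comm, ← hβ₂.1]; exact e1
      linarith
    have f3 : dist (f x) (f (γ t)) ≤ dist x (γ t) := hf x (γ t)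
    have f4 := dist_triangle (f x) (f (γ t)) p
    have f5 : dist x p = Q := dist_comm x p ▸ rfl
    have f6 : dist x (γ t) = dist (γ t) x := dist_comm _ _
    linarith [hux, f1, f2, f3, f4, f5, f6, e3]

end AuxProof
/-- **Lemma (dilation along a geodesic ray).**
Let `X` be a proper geodesic `δ`-hyperbolic metric space, `f : X → X` non-expanding,
`η = [γ]` a BRFP of `f`, and `γ` a geodesic ray with endpoint `η`. Then the limit
`lim_{t→∞} (d(γ(t),γ(0)) − d(f(γ(t)),γ(0)))` exists and is at most
`log λ_{η,γ(0)}(f) + 4δ`; moreover for every `p ∈ X`,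
`limsup_{t→∞} (d(γ(t),p) − d(f(γ(t)),p)) ≤ log λ_{η,p}(f) + 8δ`. -/


theorem dilation_along_geodesic_ray
    {X : Type*} [MetricSpace X] [ProperSpace X]
    (hgeo : IsGeodesicSpace X) (δ : ℝ) (hδ : 0 ≤ δ) (hhyp : IsDeltaHyperbolic X δ)
    (f : X → X) (hf : Nonexpanding f)
    (γ : ℝ → X) (hη : IsBRFP f γ)
    (L₀ : ℝ) (hL₀ : HasLogDilation (γ 0) γ f L₀) :
    (∃ l : ℝ,
      Filter.Tendsto (fun t : ℝ => dist (γ t) (γ 0) - dist (f (γ t)) (γ 0))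
        Filter.atTop (nhds l) ∧ l ≤ L₀ + 4 * δ) ∧
    (∀ (p : X) (L : ℝ), HasLogDilation p γ f L →
      Filter.limsup
          (fun t : ℝ => ((dist (γ t) p - dist (f (γ t)) p : ℝ) : EReal)) Filter.atTop
        ≤ ((L + 8 * δ : ℝ) : EReal)) := by
  obtain ⟨hray, hfin, hglim⟩ := hη
  constructor
  · have hbound : ∀ t : ℝ, 0 ≤ t →
        dist (γ t) (γ 0) - dist (f (γ t)) (γ 0) ≤ L₀ + 2 * δ := fun t ht =>
      pointwise_base hgeo hδ hhyp hf hray L₀ hL₀ ht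
    set G : ℝ → ℝ := fun t => dist (γ (max t 0)) (γ 0) - dist (f (γ (max t 0))) (γ 0) with hG
    have hmono : Monotone G := by
      intro a b hab
      have ha : (0:ℝ) ≤ max a 0 := le_max_right _ _
      have hb : (0:ℝ) ≤ max b 0 := le_max_right _ _
      have hab' : max a 0 ≤ max b 0 := max_le_max hab le_rfl
      have d1 : dist (γ (max a 0)) (γ 0) = max a 0 := by
        rw [dist_comm]
        have := dist_ray γ hray le_rfl ha
        simpa using this
      have d2 : dist (γ (max b 0)) (γ 0) = max b 0 := by
        rw [dist_comm]
        have := dist_ray γ hray le_rfl hb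
        simpa using this
      have d3 : dist (γ (max a 0)) (γ (max b 0)) = max b 0 - max a 0 :=
        dist_ray γ hray ha hab'
      have d4 : dist (f (γ (max b 0))) (f (γ (max a 0))) ≤ dist (γ (max b 0)) (γ (max a 0)) :=
        hf _ _
      have d5 := dist_triangle (f (γ (max b 0))) (f (γ (max a 0))) (γ 0)
      have d6 : dist (γ (max b 0)) (γ (max a 0)) = max b 0 - max a 0 := by
        rw [dist_comm]; exact d3
      simp only [hG]
      linarith
    have hbdd : BddAbove (Set.range G) := by
      refine ⟨L₀ + 2 * δ, ?_⟩
      rintro _ ⟨t, rfl⟩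
      exact hbound _ (le_max_right _ _)
    have htend := tendsto_atTop_ciSup hmono hbdd
    refine ⟨⨆ t : ℝ, G t, ?_, ?_⟩
    · refine Filter.Tendsto.congr' ?_ htend
      filter_upwards [Filter.eventually_ge_atTop (0:ℝ)] with t ht
      simp only [hG, max_eq_left ht]
    · have h1 : (⨆ t : ℝ, G t) ≤ L₀ + 2 * δ :=
        ciSup_le fun t => hbound _ (le_max_right _ _)
      linarith
  · intro p L hL
    have hev : ∀ᶠ t : ℝ in Filter.atTop,
        ((dist (γ t) p - dist (f (γ t)) p : ℝ) : EReal) ≤ ((L + 8 * δ : ℝ) : EReal) := by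
      filter_upwards [Filter.eventually_gt_atTop (dist (γ 0) p + 2 * δ),
        Filter.eventually_ge_atTop (0:ℝ)] with t h1 h2
      have h3 := pointwise_general hgeo hδ hhyp hf hray p L hL h2 h1
      exact_mod_cast le_trans h3 (by linarith)
    exact Filter.limsup_le_of_le (h := hev)
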